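/- There exists a subgroup H of Ḡ of index 5 such that the range of the natural homomorphism Ḡ → Equiv.Perm (Ḡ ⧸ H) given by left multiplication on the cosets is isomorphic (as a group) to the alternating group A₅ on five letters. -/

import Mathlib

namespace Stmt10

def a : FreeGroup (Fin 2) := FreeGroup.of 0
def b : FreeGroup (Fin 2) := FreeGroup.of 1

/-- The two relators of `π₁(W̄) = ⟨a,b | a³b²AB³Ab², (ab)²aB²Ab²AB²⟩`. -/
def rels : Set (FreeGroup (Fin 2)) :=
  { a^3 * b^2 * a⁻¹ * (b⁻¹)^3 * a⁻¹ * b^2,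
    (a * b)^2 * a * (b⁻¹)^2 * a⁻¹ * b^2 * a⁻¹ * (b⁻¹)^2 }

/-- The fundamental group `Ḡ = π₁(W̄)` of the manifold mediating the Akbulut h-cobordism. -/
abbrev Gbar := PresentedGroup rels

/-- The 5-cycle (0 1 2 3 4). -/
def A : Equiv.Perm (Fin 5) := ⟨![1,2,3,4,0], ![4,0,1,2,3], by decide, by decide⟩
/-- The 3-cycle (2 3 4). -/
def B : Equiv.Perm (Fin 5) := ⟨![0,1,3,4,2], ![0,1,4,2,3], by decide, by decide⟩

def f : Fin 2 → Equiv.Perm (Fin 5) := ![A, B]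

lemma hrels : ∀ r ∈ rels, FreeGroup.lift f r = 1 := by
  intro r hr
  simp only [rels, Set.mem_insert_iff, Set.mem_singleton_iff] at hr
  rcases hr with rfl | rfl <;>
  · simp only [a, b, map_mul, map_pow, map_inv, FreeGroup.lift_apply_of]
    decide

/-- The homomorphism Ḡ → S₅. -/
noncomputable def φ : Gbar →* Equiv.Perm (Fin 5) := PresentedGroup.toGroup hrels

def wordFn : Bool → Equiv.Perm (Fin 5) := fun t => if t then B else A

def words : List (List Bool) := [[], [true], [true, true], [false, false, false, false, true, false, true], [false, false, false, false, true, false], [false, false, false, false, true, false, true, true], [false, true, false, false, false], [false, true, false, false, false, true], [false, true, true, false, false], [false, true, true, false, true, false], [false, false, true, false, true, false], [false, true, true, false, true, false, true], [false, false, true, true, false, true, false], [false, false, false, true, false, true, false], [false, false, true, true, false, true, false, true], [false, true, true], [false], [false, true], [true, false, true, true], [true, false, true], [true, false], [true, true, false, true, true], [true, true, false], [true, true, false, true], [true, false, false, false, false], [false, true, true, false], [false, true, true, false, true], [true, false, false, false, true, false, true], [true, false, false, false, true, false], [false, false, false, false, true, false, true, false], [false, false, true], [false, false, true, true], [false, false],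 [false, true, false], [false, true, false, true, true], [false, true, false, true], [false, false, true, false], [false, false, true, false, true, true], [false, false, true, false, true], [false, false, true, true, false, true], [false, true, false, false, false, false], [false, false, true, true, false], [true, false, true, false], [true, false, true, false, true, true], [true, false, true, false, true], [false, false, false], [false, false, false, true], [true, false, false], [false, false, false, false], [false, false, false, false, true], [false, true, false, false], [false, false, false, true, false, true], [false, false, false, true, false], [false, false, false, true, false, true, true], [true, false, false, false], [true, false, false, false, true], [true, true, false, false], [true, true, false, true, false], [false, true, false, true, false], [true, true, false, true, false, true]]

def L : List (Equiv.Perm (Fin 5)) := words.map (fun w => (w.map wordFn).prod)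

lemma L_nodup : L.Nodup := by decide

lemma L_length : L.length = 60 := by decide

lemma mem_closure_of_mem_L {g : Equiv.Perm (Fin 5)} (hg : g ∈ L) :
    g ∈ Subgroup.closure ({A, B} : Set (Equiv.Perm (Fin 5))) := by
  simp only [L, List.mem_map] at hg
  obtain ⟨w, -, rfl⟩ := hg
  refine Subgroup.list_prod_mem _ ?_
  intro x hx
  simp only [List.mem_map] at hx
  obtain ⟨t, -, rfl⟩ := hx
  cases t
  · exact Subgroup.subset_closure (Or.inl rfl)
  · exact Subgroup.subset_closure (Or.inr rfl)

lemma closure_AB : Subgroup.closure ({A, B} : Set (Equiv.Perm (Fin 5)))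
    = alternatingGroup (Fin 5) := by
  set K := Subgroup.closure ({A, B} : Set (Equiv.Perm (Fin 5))) with hK
  have hle : K ≤ alternatingGroup (Fin 5) := by
    rw [hK, Subgroup.closure_le]
    rintro x (rfl | rfl) <;>
      (simp only [SetLike.mem_coe, Equiv.Perm.mem_alternatingGroup]; decide)
  refine Subgroup.eq_of_le_of_card_ge hle ?_
  have hcard60 : Nat.card (alternatingGroup (Fin 5)) = 60 := by
    have h := two_mul_card_alternatingGroup (α := Fin 5)
    rw [Fintype.card_perm, Fintype.card_fin] at h
    have h5 : (5 : ℕ).factorial = 120 := by decide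
    rw [h5] at h
    rw [Nat.card_eq_fintype_card]
    omega
  rw [hcard60]
  -- inject L.toFinset into K
  classical
  have : L.toFinset.card ≤ (Finset.univ : Finset K).card := by
    refine Finset.card_le_card_of_injOn
      (fun g => if h : g ∈ K then (⟨g, h⟩ : K) else 1) (fun g _ => Finset.mem_univ _) ?_
    intro g1 h1 g2 h2 heq
    simp only [Finset.mem_coe, List.mem_toFinset] at h1 h2
    have m1 : g1 ∈ K := mem_closure_of_mem_L h1
    have m2 : g2 ∈ K := mem_closure_of_mem_L h2
    simp only [dif_pos m1, dif_pos m2, Subtype.mk.injEq] at heq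
    exact heq
  have hL : L.toFinset.card = 60 := by
    rw [List.toFinset_card_of_nodup L_nodup, L_length]
  rw [hL, Finset.card_univ, ← Nat.card_eq_fintype_card] at this
  exact this

lemma range_φ : φ.range = alternatingGroup (Fin 5) := by
  rw [← closure_AB]
  have h1 : φ.range = Subgroup.map φ ⊤ := φ.range_eq_map
  rw [h1, ← PresentedGroup.closure_range_of rels, MonoidHom.map_closure]
  congr 1
  ext x
  simp only [Set.mem_image, Set.mem_range, Set.mem_insert_iff, Set.mem_singleton_iff]
  constructor
  · rintro ⟨y, ⟨i, rfl⟩, rfl⟩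
    fin_cases i
    · left; exact PresentedGroup.toGroup.of hrels
    · right; exact PresentedGroup.toGroup.of hrels
  · rintro (rfl | rfl)
    · exact ⟨PresentedGroup.of 0, ⟨0, rfl⟩, PresentedGroup.toGroup.of hrels⟩
    · exact ⟨PresentedGroup.of 1, ⟨1, rfl⟩, PresentedGroup.toGroup.of hrels⟩

/-- `Perm` congruence as a `MulEquiv`. -/
def permMulEquiv {α β : Type*} (e : α ≃ β) : Equiv.Perm α ≃* Equiv.Perm β where
  toEquiv := e.permCongr
  map_mul' p q := by
    apply Equiv.ext
    intro x
    simp [Equiv.permCongr_apply]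

theorem exists_index_five_subgroup_with_coset_action_A5 :
    ∃ H : Subgroup Gbar, H.index = 5 ∧
      Nonempty ((MulAction.toPermHom Gbar (Gbar ⧸ H)).range ≃* alternatingGroup (Fin 5)) := by
  classical
  letI act : MulAction Gbar (Fin 5) := MulAction.compHom _ φ
  have smul_def : ∀ (g : Gbar) (x : Fin 5), g • x = φ g x := fun g x => rfl
  have htrans : MulAction.IsPretransitive Gbar (Fin 5) := by
    constructor
    intro x y
    have hpow : ∃ k : Fin 5, (A ^ (k : ℕ)) x = y := by revert x y; decide
    obtain ⟨k, hk⟩ := hpow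
    refine ⟨(PresentedGroup.of 0) ^ (k : ℕ), ?_⟩
    rw [smul_def, map_pow]
    have : φ (PresentedGroup.of 0) = A := PresentedGroup.toGroup.of hrels
    rw [this]
    exact hk
  refine ⟨MulAction.stabilizer Gbar (0 : Fin 5), ?_, ?_⟩
  · rw [MulAction.index_stabilizer_of_transitive, Nat.card_eq_fintype_card, Fintype.card_fin]
  · set H := MulAction.stabilizer Gbar (0 : Fin 5)
    -- the equivariant equivalence
    let e : Gbar ⧸ H ≃ Fin 5 :=
      (MulAction.orbitEquivQuotientStabilizer Gbar (0 : Fin 5)).symm.trans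
        ((Equiv.setCongr (MulAction.orbit_eq_univ Gbar (0 : Fin 5))).trans
          (Equiv.Set.univ (Fin 5)))
    have he : ∀ (g : Gbar) (q : Gbar ⧸ H), e (g • q) = g • e q := by
      intro g q
      induction q using QuotientGroup.induction_on with
      | H x =>
        have h1 : (g • (QuotientGroup.mk x) : Gbar ⧸ H) = QuotientGroup.mk (g * x) := rfl
        have h2 : ∀ z : Gbar, e (QuotientGroup.mk z) = z • (0 : Fin 5) := fun z => rfl
        rw [h1, h2, h2, mul_smul]
    let σ : Equiv.Perm (Fin 5) ≃* Equiv.Perm (Gbar ⧸ H) := permMulEquiv e.symm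
    have hψ : MulAction.toPermHom Gbar (Gbar ⧸ H)
        = σ.toMonoidHom.comp (MulAction.toPermHom Gbar (Fin 5)) := by
      refine MonoidHom.ext fun g => Equiv.ext fun q => ?_
      show g • q = e.symm (g • (e q))
      rw [← he, Equiv.symm_apply_apply]
    have hφ' : MulAction.toPermHom Gbar (Fin 5) = φ :=
      MonoidHom.ext fun g => Equiv.ext fun x => rfl
    have hrange : (MulAction.toPermHom Gbar (Gbar ⧸ H)).range
        = Subgroup.map σ.toMonoidHom (alternatingGroup (Fin 5)) := by
      rw [hψ, MonoidHom.range_comp, hφ', range_φ]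
    exact ⟨(MulEquiv.subgroupCongr hrange).trans
      ((MulEquiv.subgroupMap σ (alternatingGroup (Fin 5))).symm)⟩

end Stmt10
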